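/- arXiv:2205.04218 — 5 statements merged into one kernel-verified Lean document; each statement's English description precedes it below -/
import Mathlib

section
/- Let g be a finite-dimensional complex Lie algebra which is strongly disemisimple with g = s1 ∔ s2 the direct vector space sum of two semisimple subalgebras s1 and s2, and let s be a Levi subalgebra of g with s1 ⊆ s. Then there exists a semisimple subalgebra s3 of g such that s = s1 + s3 (vector space sum) and dim(s1 ∩ s3) = dim(rad(g)). -/
open Module

section Aux

variable {R L₁ L₂ : Type*} [CommRing R] [LieRing L₁] [LieAlgebra R L₁]
    [LieRing L₂] [LieAlgebra R L₂]

/-- Transfer `HasTrivialRadical` along a Lie algebra equivalence. -/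
lemma hasTrivialRadical_of_lieEquiv (e : L₁ ≃ₗ⁅R⁆ L₂)
    (h : LieAlgebra.HasTrivialRadical R L₁) :
    LieAlgebra.HasTrivialRadical R L₂ := by
  apply LieAlgebra.hasTrivialRadical_of_no_solvable_ideals
  intro I hI
  set J : LieIdeal R L₁ := LieIdeal.comap e.toLieHom I with hJdef
  have hmem : ∀ x : L₁, x ∈ J ↔ e x ∈ I := fun x => Iff.rfl
  have hJsolv : LieAlgebra.IsSolvable J := by
    let φ : J →ₗ⁅R⁆ I :=
      { toFun := fun x => ⟨e x.1, (hmem x.1).mp x.2⟩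
        map_add' := fun x y => Subtype.ext (e.toLieHom.map_add x.1 y.1)
        map_smul' := fun c x => Subtype.ext (e.toLieHom.map_smul c x.1)
        map_lie' := fun {x y} => Subtype.ext (e.toLieHom.map_lie x.1 y.1) }
    have hφ : Function.Injective φ := by
      intro x y hxy
      have := congrArg Subtype.val hxy
      exact Subtype.ext (e.injective this)
    exact hφ.lieAlgebra_isSolvable
  have hJbot : J = ⊥ := h.eq_bot_of_isSolvable J
  rw [eq_bot_iff]
  intro x hx
  have hx' : e.symm x ∈ J := by
    rw [hmem]
    simpa using hx
  rw [hJbot] at hx'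
  have h0 : e.symm x = 0 := by simpa using hx'
  have := congrArg e h0
  rw [e.apply_symm_apply] at this
  rw [show e 0 = 0 from e.toLieHom.map_zero] at this
  simpa using this

/-- The quotient map by a Lie ideal, as a Lie algebra morphism. -/
def lieQuotMk {R L : Type*} [CommRing R] [LieRing L] [LieAlgebra R L] (I : LieIdeal R L) :
    L →ₗ⁅R⁆ L ⧸ I :=
  { I.toSubmodule.mkQ with map_lie' := fun {_ _} => rfl }

@[simp] lemma lieQuotMk_apply {R L : Type*} [CommRing R] [LieRing L] [LieAlgebra R L]
    (I : LieIdeal R L) (x : L) : lieQuotMk I x = LieSubmodule.Quotient.mk (N := I) x := rfl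

end Aux

/-- Let `L` be a finite-dimensional complex Lie algebra which is
strongly disemisimple, `L = s₁ ∔ s₂` with `s₁, s₂` semisimple subalgebras and
`s₁ ∩ s₂ = 0`, and let `s` be a Levi subalgebra of `L` (a semisimple subalgebra which
is a vector space complement of the radical) with `s₁ ⊆ s`. Then there is a semisimple
subalgebra `s₃` of `L` with `s = s₁ + s₃` (vector space sum) and
`dim (s₁ ∩ s₃) = dim rad(L)`. -/
theorem strongly_disemisimple_levi_decomposition
    {L : Type*} [LieRing L] [LieAlgebra ℂ L] [FiniteDimensional ℂ L]
    (s₁ s₂ s : LieSubalgebra ℂ L)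
    (h₁ : LieAlgebra.HasTrivialRadical ℂ s₁)
    (h₂ : LieAlgebra.HasTrivialRadical ℂ s₂)
    (hsum : s₁.toSubmodule ⊔ s₂.toSubmodule = ⊤)
    (hdisj : s₁.toSubmodule ⊓ s₂.toSubmodule = ⊥)
    (hs : LieAlgebra.HasTrivialRadical ℂ s)
    (hlevi_sum : s.toSubmodule ⊔ (LieAlgebra.radical ℂ L).toSubmodule = ⊤)
    (hlevi_disj : s.toSubmodule ⊓ (LieAlgebra.radical ℂ L).toSubmodule = ⊥)
    (h₁s : s₁ ≤ s) :
    ∃ s₃ : LieSubalgebra ℂ L,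
      LieAlgebra.HasTrivialRadical ℂ s₃ ∧
      s₁.toSubmodule ⊔ s₃.toSubmodule = s.toSubmodule ∧
      finrank ℂ ↥(s₁.toSubmodule ⊓ s₃.toSubmodule) =
        finrank ℂ ↥(LieAlgebra.radical ℂ L) := by
  classical
  set rad := LieAlgebra.radical ℂ L with hrad
  let π : L →ₗ⁅ℂ⁆ L ⧸ rad := lieQuotMk rad
  have hπ_ker : ∀ x : L, π x = 0 ↔ x ∈ rad := fun x =>
    LieSubmodule.Quotient.mk_eq_zero' (N := rad)
  -- the restriction of π to s is bijective
  let e : s →ₗ⁅ℂ⁆ L ⧸ rad := π.comp s.incl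
  have he_inj : Function.Injective e := by
    intro x y hxy
    have h0 : π ((x : L) - y) = 0 := by
      rw [map_sub]
      rw [show π (x : L) = e x from rfl, show π (y : L) = e y from rfl, hxy, sub_self]
    have hmem : ((x : L) - y) ∈ s.toSubmodule ⊓ rad.toSubmodule :=
      ⟨sub_mem x.2 y.2, (hπ_ker _).mp h0⟩
    rw [hlevi_disj] at hmem
    exact Subtype.ext (sub_eq_zero.mp hmem)
  have he_surj : Function.Surjective e := by
    intro q
    obtain ⟨y, rfl⟩ := LieSubmodule.Quotient.surjective_mk' (N := rad) q
    have hy : y ∈ s.toSubmodule ⊔ rad.toSubmodule := by rw [hlevi_sum]; trivial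
    obtain ⟨a, ha, b, hb, rfl⟩ := Submodule.mem_sup.mp hy
    refine ⟨⟨a, ha⟩, ?_⟩
    have hb0 : π b = 0 := (hπ_ker b).mpr hb
    show π a = _
    have : (LieSubmodule.Quotient.mk' rad) (a + b) = π a + π b := rfl
    rw [this, hb0, add_zero]
  let E : s ≃ₗ⁅ℂ⁆ L ⧸ rad := LieEquiv.ofBijective e ⟨he_inj, he_surj⟩
  -- s₂ ∩ rad = 0
  have hs₂rad : ∀ x : L, x ∈ s₂ → x ∈ rad → x = 0 := by
    intro x hx hxr
    set J : LieIdeal ℂ s₂ := LieIdeal.comap s₂.incl rad with hJdef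
    have hmemJ : ∀ y : s₂, y ∈ J ↔ (y : L) ∈ rad := fun y => Iff.rfl
    have hJsolv : LieAlgebra.IsSolvable J := by
      let φ : J →ₗ⁅ℂ⁆ rad :=
        { toFun := fun y => ⟨(y.1 : L), (hmemJ y.1).mp y.2⟩
          map_add' := fun a b => rfl
          map_smul' := fun c a => rfl
          map_lie' := fun {a b} => rfl }
      have hφ : Function.Injective φ := by
        intro a b hab
        have := congrArg Subtype.val hab
        exact Subtype.ext (Subtype.ext this)
      exact hφ.lieAlgebra_isSolvable
    have hJbot : J = ⊥ := h₂.eq_bot_of_isSolvable J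
    have : (⟨x, hx⟩ : s₂) ∈ J := (hmemJ _).mpr hxr
    rw [hJbot] at this
    simpa using congrArg Subtype.val (by simpa using this : (⟨x, hx⟩ : s₂) = 0)
  -- the restriction of π to s₂ is injective
  let f : s₂ →ₗ⁅ℂ⁆ L ⧸ rad := π.comp s₂.incl
  have hf_inj : Function.Injective f := by
    intro x y hxy
    have h0 : π ((x : L) - y) = 0 := by
      rw [map_sub]
      rw [show π (x : L) = f x from rfl, show π (y : L) = f y from rfl, hxy, sub_self]
    exact Subtype.ext (sub_eq_zero.mp (hs₂rad _ (sub_mem x.2 y.2) ((hπ_ker _).mp h0)))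
  -- the composite map g : s₂ → L
  let g : s₂ →ₗ⁅ℂ⁆ L := s.incl.comp (E.symm.toLieHom.comp f)
  have hg_inj : Function.Injective g := by
    intro x y hxy
    exact hf_inj (E.symm.injective (Subtype.ext hxy))
  have hπg : ∀ x : s₂, π (g x) = π (x : L) := by
    intro x
    have h1 : π (g x) = e (E.symm (f x)) := rfl
    have h2 : e (E.symm (f x)) = E (E.symm (f x)) := rfl
    rw [h1, h2, E.apply_symm_apply]
    rfl
  have hg_mem_s : ∀ x : s₂, g x ∈ s := fun x => (E.symm (f x)).2
  have hsup : s₁.toSubmodule ⊔ (LieSubalgebra.toSubmodule g.range) = s.toSubmodule := by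
    apply le_antisymm
    · apply sup_le
      · exact fun x hx => h₁s hx
      · rintro x hx
        obtain ⟨y, rfl⟩ := (LieHom.mem_range g _).mp hx
        exact hg_mem_s y
    · intro x hx
      have hxL : x ∈ s₁.toSubmodule ⊔ s₂.toSubmodule := by rw [hsum]; trivial
      obtain ⟨a, ha, b, hb, rfl⟩ := Submodule.mem_sup.mp hxL
      -- show a + b = a + g ⟨b, hb⟩
      have key : a + b = a + g ⟨b, hb⟩ := by
        have hdiff : (a + b) - a - g ⟨b, hb⟩ ∈ s.toSubmodule ⊓ rad.toSubmodule := by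
          constructor
          · exact sub_mem (sub_mem hx (h₁s ha)) (hg_mem_s ⟨b, hb⟩)
          · apply (hπ_ker _).mp
            have : π ((a + b) - a - g ⟨b, hb⟩) = π b - π (g ⟨b, hb⟩) := by
              rw [map_sub, map_sub, map_add]
              abel
            rw [this, hπg ⟨b, hb⟩]
            simp [sub_self]
        rw [hlevi_disj] at hdiff
        have : (a + b) - a - g ⟨b, hb⟩ = 0 := hdiff
        linear_combination (norm := abel) this
      rw [key]
      exact Submodule.add_mem _ (Submodule.mem_sup_left ha)
        (Submodule.mem_sup_right ((LieHom.mem_range g _).mpr ⟨⟨b, hb⟩, rfl⟩))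
  refine ⟨g.range, hasTrivialRadical_of_lieEquiv (LieEquiv.ofInjective g hg_inj) h₂, hsup, ?_⟩
  -- dimension count
  have hkey := Submodule.finrank_sup_add_finrank_inf_eq s₁.toSubmodule
    (LieSubalgebra.toSubmodule g.range)
  rw [hsup] at hkey
  have h12 := Submodule.finrank_sup_add_finrank_inf_eq s₁.toSubmodule s₂.toSubmodule
  rw [hsum, hdisj] at h12
  have hlr := Submodule.finrank_sup_add_finrank_inf_eq s.toSubmodule rad.toSubmodule
  rw [hlevi_sum, hlevi_disj] at hlr
  have h23 : finrank ℂ (LieSubalgebra.toSubmodule g.range) = finrank ℂ s₂.toSubmodule :=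
    ((LieEquiv.ofInjective g hg_inj).toLinearEquiv.finrank_eq).symm
  have htop : finrank ℂ (⊤ : Submodule ℂ L) = finrank ℂ L := finrank_top ℂ L
  have hbot : finrank ℂ (⊥ : Submodule ℂ L) = 0 := finrank_bot ℂ L
  have hgoal : finrank ℂ ↥(LieAlgebra.radical ℂ L) = finrank ℂ ↥(rad.toSubmodule) := rfl
  rw [htop, hbot] at h12 hlr
  rw [hgoal]
  omega
end

section
/- Let V = ℂ³ with basis (e1, e2, e3). Define two Lie algebra structures on V: g = r_{3,1}(ℂ) with brackets [e1,e2] = e2, [e1,e3] = e3 (all other brackets of basis vectors zero), and n = r_3(ℂ) with brackets {e1,e2} = e2, {e1,e3} = e2 + e3 (all other brackets of basis vectors zero). Then the bilinear product on V determined by e1·e3 = −e2 and all other products of basis vectors equal to zero is a post-Lie algebra structure on the pair (g, n). Moreover, the Lie algebras g and n are not isomorphic (both are solvable). -/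
/-!
The identities defining Lie brackets and post-Lie structures are polynomial identities in
the coordinates, verified componentwise. For non-isomorphy: in `r_{3,1}(ℂ)` every `ad a`
satisfies `(ad a)² = a₁ • ad a`, a property invariant under isomorphism, whereas in
`r₃(ℂ)` the operator `ad e₁` has a nontrivial Jordan block on `span(e₂, e₃)`.
-/

noncomputable section

/-- A map `V → V → V` is ℂ-bilinear. -/
def IsBilin {V : Type*} [AddCommGroup V] [Module ℂ V] (f : V → V → V) : Prop :=
  (∀ (a : ℂ) (x y z : V), f (a • x + y) z = a • f x z + f y z) ∧
  (∀ (a : ℂ) (x y z : V), f x (a • y + z) = a • f x y + f x z)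

/-- `f` is a Lie bracket on the complex vector space `V`. -/
def IsLieBracket {V : Type*} [AddCommGroup V] [Module ℂ V] (f : V → V → V) : Prop :=
  IsBilin f ∧ (∀ x, f x x = 0) ∧
  ∀ x y z, f x (f y z) + f y (f z x) + f z (f x y) = 0

/-- `p` is a post-Lie algebra structure on the pair of Lie brackets `(g, n)` on `V`. -/
def IsPostLieStruct {V : Type*} [AddCommGroup V] [Module ℂ V]
    (g n p : V → V → V) : Prop :=
  IsBilin p ∧
  (∀ x y, p x y - p y x = g x y - n x y) ∧
  (∀ x y z, p (g x y) z = p x (p y z) - p y (p x z)) ∧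
  (∀ x y z, p x (n y z) = n (p x y) z + n y (p x z))

/-- The Lie algebras `(V, g)` and `(W, h)` are isomorphic. -/
def LieBracketIso {V W : Type*} [AddCommGroup V] [Module ℂ V] [AddCommGroup W]
    [Module ℂ W] (g : V → V → V) (h : W → W → W) : Prop :=
  ∃ e : V ≃ₗ[ℂ] W, ∀ x y, e (g x y) = h (e x) (e y)

/-- The bracket of `r_{3,1}(ℂ)` on `ℂ³` in the basis `(e₁, e₂, e₃)`:
`[e₁,e₂] = e₂`, `[e₁,e₃] = e₃`. -/
def r31Bracket (x y : Fin 3 → ℂ) : Fin 3 → ℂ :=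
  ![0, x 0 * y 1 - y 0 * x 1, x 0 * y 2 - y 0 * x 2]

/-- The bracket of `r_3(ℂ)` on `ℂ³` in the basis `(e₁, e₂, e₃)`:
`{e₁,e₂} = e₂`, `{e₁,e₃} = e₂ + e₃`. -/
def r3Bracket (x y : Fin 3 → ℂ) : Fin 3 → ℂ :=
  ![0, x 0 * (y 1 + y 2) - y 0 * (x 1 + x 2), x 0 * y 2 - y 0 * x 2]

/-- The bilinear product determined by `e₁ · e₃ = -e₂`, all other products of basis
vectors zero. -/
def r31r3Product (x y : Fin 3 → ℂ) : Fin 3 → ℂ :=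
  ![0, -(x 0 * y 2), 0]

section Transfer

variable {V W : Type*} [AddCommGroup V] [Module ℂ V] [AddCommGroup W] [Module ℂ W]

def AdSquareProportional (h : V → V → V) : Prop :=
  ∀ a, ∃ c : ℂ, ∀ b, h a (h a b) = c • h a b

theorem LieBracketIso.adSquareProportional {g : V → V → V} {h : W → W → W}
    (hgh : LieBracketIso g h) (hg : AdSquareProportional g) : AdSquareProportional h := by
  obtain ⟨e, he⟩ := hgh
  intro a
  obtain ⟨c, hc⟩ := hg (e.symm a)
  exact ⟨c, fun b => by simpa [he] using congrArg e (hc (e.symm b))⟩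

end Transfer

theorem isLieBracket_r31Bracket : IsLieBracket r31Bracket := by
  refine ⟨⟨?_, ?_⟩, ?_, ?_⟩ <;> intros <;> funext i <;> fin_cases i <;>
    simp [r31Bracket] <;> ring

theorem isLieBracket_r3Bracket : IsLieBracket r3Bracket := by
  refine ⟨⟨?_, ?_⟩, ?_, ?_⟩ <;> intros <;> funext i <;> fin_cases i <;>
    simp [r3Bracket] <;> ring

theorem isPostLieStruct_r31r3Product :
    IsPostLieStruct r31Bracket r3Bracket r31r3Product := by
  refine ⟨⟨?_, ?_⟩, ?_, ?_, ?_⟩ <;> intros <;> funext i <;> fin_cases i <;>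
    simp [r31r3Product, r31Bracket, r3Bracket] <;> ring

theorem adSquareProportional_r31Bracket : AdSquareProportional r31Bracket :=
  fun a => ⟨a 0, fun b => by funext i; fin_cases i <;> simp [r31Bracket]⟩

theorem not_adSquareProportional_r3Bracket : ¬ AdSquareProportional r3Bracket := by
  intro h
  obtain ⟨c, hc⟩ := h ![1, 0, 0]
  -- `{e₁, e₃} = e₂ + e₃` and `{e₁, e₂ + e₃} = 2 e₂ + e₃`
  have h₂ := congrFun (hc ![0, 0, 1]) 1
  have h₃ := congrFun (hc ![0, 0, 1]) 2
  simp [r3Bracket] at h₂ h₃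
  norm_num [← h₃] at h₂

/-- On `V = ℂ³`, the brackets of `g = r_{3,1}(ℂ)` and `n = r₃(ℂ)`
are Lie brackets, the product given by `e₁ · e₃ = -e₂` (all other products of basis
vectors zero) is a post-Lie algebra structure on the pair `(g, n)`, and the Lie
algebras `g` and `n` are not isomorphic. -/
theorem postLie_on_r31_r3 :
    IsLieBracket r31Bracket ∧ IsLieBracket r3Bracket ∧
    IsPostLieStruct r31Bracket r3Bracket r31r3Product ∧
    ¬ LieBracketIso r31Bracket r3Bracket :=
  ⟨isLieBracket_r31Bracket, isLieBracket_r3Bracket, isPostLieStruct_r31r3Product,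
    fun hiso => not_adSquareProportional_r3Bracket
      (hiso.adSquareProportional adSquareProportional_r31Bracket)⟩
end
end

section
/- There exists a post-Lie algebra structure on the pair (g, n), where g = sl_2(ℂ) ⊕ ℂ⁴ (the direct Lie algebra sum of sl_2(ℂ) and the 4-dimensional abelian Lie algebra) and n = ℂ⁴ ⊕ n_3(ℂ) (the direct Lie algebra sum of the 4-dimensional abelian Lie algebra and the 3-dimensional Heisenberg Lie algebra), both regarded as Lie brackets on the same 7-dimensional complex vector space. In particular, there is a pair (g, n) with g reductive non-semisimple and n nilpotent non-abelian admitting a post-Lie algebra structure. -/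
noncomputable section

/-- The bracket of `g = sl₂(ℂ) ⊕ ℂ⁴` on `ℂ⁷`: coordinates `0, 1, 2` carry `sl₂(ℂ)`
in the standard basis `(e, f, h) = (E₁₂, E₂₁, E₁₁ - E₂₂)` with `[e,f] = h`,
`[h,e] = 2e`, `[h,f] = -2f`, and coordinates `3, 4, 5, 6` carry the `4`-dimensional
abelian Lie algebra. -/
def sl2C4Bracket (x y : Fin 7 → ℂ) : Fin 7 → ℂ :=
  ![2 * (x 2 * y 0 - y 2 * x 0), -2 * (x 2 * y 1 - y 2 * x 1),
    x 0 * y 1 - y 0 * x 1, 0, 0, 0, 0]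

/-- The bracket of `n = ℂ⁴ ⊕ n₃(ℂ)` on `ℂ⁷`: coordinates `0, 1, 2, 3` carry the
`4`-dimensional abelian Lie algebra, and coordinates `4, 5, 6` carry the Heisenberg
Lie algebra `n₃(ℂ)` with basis `(e, f, z)` and only nonzero bracket `{e, f} = z`. -/
def c4HeisBracket (x y : Fin 7 → ℂ) : Fin 7 → ℂ :=
  ![0, 0, 0, 0, 0, 0, x 4 * y 5 - y 4 * x 5]

/-!
Write `ℂ⁷ = gl₂(ℂ) × ℂ³`, coordinates `0, 1, 2, 3` being those of `gl₂(ℂ)` in the basis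
`(e, f, h, 1)` and `4, 5, 6` those of `n₃(ℂ)`. Then `g` is `gl₂(ℂ)` with the commutator
times the abelian `ℂ³`, and `n` is the abelian `gl₂(ℂ)` times `n₃(ℂ)`, so the pair `(g, n)`
is a product of two pairs that each carry an evident post-Lie structure. On `gl₂(ℂ)` take
matrix multiplication: its commutator is the bracket of `g`, and the second axiom is
associativity. On `ℂ³` take `x · y = -½ {x, y}`: the first axiom is the antisymmetry of
`{·, ·}`, and the other two reduce to the vanishing of double brackets in the two-step
nilpotent `n₃(ℂ)`.
-/

variable {V W : Type*} [AddCommGroup V] [Module ℂ V] [AddCommGroup W] [Module ℂ W]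

namespace IsBilin

variable {f : V → V → V}

theorem add_left (hf : IsBilin f) (x y z : V) : f (x + y) z = f x z + f y z := by
  simpa using hf.1 1 x y z

theorem add_right (hf : IsBilin f) (x y z : V) : f x (y + z) = f x y + f x z := by
  simpa using hf.2 1 x y z

theorem zero_left (hf : IsBilin f) (z : V) : f 0 z = 0 := by
  simpa using hf.add_left 0 0 z

theorem zero_right (hf : IsBilin f) (x : V) : f x 0 = 0 := by
  simpa using hf.add_right x 0 0

theorem smul_left (hf : IsBilin f) (a : ℂ) (x z : V) : f (a • x) z = a • f x z := by
  simpa [hf.zero_left] using hf.1 a x 0 z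

theorem smul_right (hf : IsBilin f) (a : ℂ) (x y : V) : f x (a • y) = a • f x y := by
  simpa [hf.zero_right] using hf.2 a x y 0

theorem comap {F : W → W → W} (hF : IsBilin F) (φ : V →ₗ[ℂ] W) (hφ : Function.Injective φ)
    (hf : ∀ x y, φ (f x y) = F (φ x) (φ y)) : IsBilin f :=
  ⟨fun a x y z => hφ <| by simp only [hf, map_add, map_smul, hF.1],
    fun a x y z => hφ <| by simp only [hf, map_add, map_smul, hF.2]⟩

theorem prod {f' : W → W → W} (hf : IsBilin f) (hf' : IsBilin f') :
    IsBilin fun a b : V × W => (f a.1 b.1, f' a.2 b.2) :=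
  ⟨fun a x y z => Prod.ext (hf.1 a x.1 y.1 z.1) (hf'.1 a x.2 y.2 z.2),
    fun a x y z => Prod.ext (hf.2 a x.1 y.1 z.1) (hf'.2 a x.2 y.2 z.2)⟩

end IsBilin

namespace IsLieBracket

variable {f : V → V → V}

theorem swap (hf : IsLieBracket f) (x y : V) : f y x = -f x y := by
  have h := hf.2.1 (x + y)
  rw [hf.1.add_left, hf.1.add_right, hf.1.add_right, hf.2.1, hf.2.1, zero_add, add_zero] at h
  exact eq_neg_of_add_eq_zero_right h

theorem comap {F : W → W → W} (hF : IsLieBracket F) (φ : V →ₗ[ℂ] W)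
    (hφ : Function.Injective φ) (hf : ∀ x y, φ (f x y) = F (φ x) (φ y)) : IsLieBracket f :=
  ⟨hF.1.comap φ hφ hf, fun x => hφ <| by rw [hf, hF.2.1, map_zero],
    fun x y z => hφ <| by simp only [map_add, hf, map_zero]; exact hF.2.2 _ _ _⟩

theorem prod {f' : W → W → W} (hf : IsLieBracket f) (hf' : IsLieBracket f') :
    IsLieBracket fun a b : V × W => (f a.1 b.1, f' a.2 b.2) :=
  ⟨hf.1.prod hf'.1, fun x => Prod.ext (hf.2.1 x.1) (hf'.2.1 x.2),
    fun x y z => Prod.ext (hf.2.2 x.1 y.1 z.1) (hf'.2.2 x.2 y.2 z.2)⟩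

end IsLieBracket

theorem isLieBracket_zero : IsLieBracket fun _ _ : V => (0 : V) :=
  ⟨⟨by simp, by simp⟩, fun _ => rfl, by simp⟩

theorem isLieBracket_commutator {A : Type*} [Ring A] [Algebra ℂ A] :
    IsLieBracket fun x y : A => x * y - y * x := by
  refine ⟨⟨fun a x y z => ?_, fun a x y z => ?_⟩, fun x => sub_self _, fun x y z => ?_⟩
  · simp only [add_mul, mul_add, smul_mul_assoc, mul_smul_comm, smul_sub]
    abel
  · simp only [add_mul, mul_add, smul_mul_assoc, mul_smul_comm, smul_sub]
    abel
  · noncomm_ring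

namespace IsPostLieStruct

variable {g n p : V → V → V}

theorem comap {G N P : W → W → W} (hP : IsPostLieStruct G N P) (φ : V →ₗ[ℂ] W)
    (hφ : Function.Injective φ) (hg : ∀ x y, φ (g x y) = G (φ x) (φ y))
    (hn : ∀ x y, φ (n x y) = N (φ x) (φ y)) (hp : ∀ x y, φ (p x y) = P (φ x) (φ y)) :
    IsPostLieStruct g n p :=
  ⟨hP.1.comap φ hφ hp,
    fun x y => hφ <| by simp only [map_sub, hg, hn, hp]; exact hP.2.1 _ _,
    fun x y z => hφ <| by simp only [map_sub, hg, hp]; exact hP.2.2.1 _ _ _,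
    fun x y z => hφ <| by simp only [map_add, hn, hp]; exact hP.2.2.2 _ _ _⟩

theorem prod {g' n' p' : W → W → W} (h : IsPostLieStruct g n p)
    (h' : IsPostLieStruct g' n' p') :
    IsPostLieStruct (fun a b : V × W => (g a.1 b.1, g' a.2 b.2))
      (fun a b => (n a.1 b.1, n' a.2 b.2)) (fun a b => (p a.1 b.1, p' a.2 b.2)) :=
  ⟨h.1.prod h'.1, fun x y => Prod.ext (h.2.1 x.1 y.1) (h'.2.1 x.2 y.2),
    fun x y z => Prod.ext (h.2.2.1 x.1 y.1 z.1) (h'.2.2.1 x.2 y.2 z.2),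
    fun x y z => Prod.ext (h.2.2.2 x.1 y.1 z.1) (h'.2.2.2 x.2 y.2 z.2)⟩

end IsPostLieStruct

theorem isPostLieStruct_commutator_zero_mul {A : Type*} [Ring A] [Algebra ℂ A] :
    IsPostLieStruct (fun x y : A => x * y - y * x) (fun _ _ => 0) (· * ·) :=
  ⟨⟨fun a x y z => by simp only [add_mul, smul_mul_assoc],
      fun a x y z => by simp only [mul_add, mul_smul_comm]⟩,
    fun x y => (sub_zero _).symm,
    fun x y z => by simp only [sub_mul, mul_assoc],
    fun x y z => by simp⟩

theorem IsLieBracket.isPostLieStruct_zero_neg_half_smul {n : V → V → V} (hn : IsLieBracket n)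
    (h2 : ∀ x y z, n x (n y z) = 0) :
    IsPostLieStruct (fun _ _ => 0) n fun x y => (-2⁻¹ : ℂ) • n x y := by
  have h2' (x y z : V) : n (n x y) z = 0 := by rw [hn.swap, h2, neg_zero]
  refine ⟨⟨fun a x y z => ?_, fun a x y z => ?_⟩, fun x y => ?_, fun x y z => ?_, fun x y z => ?_⟩
  · beta_reduce
    rw [hn.1.1, smul_add, smul_comm]
  · beta_reduce
    rw [hn.1.2, smul_add, smul_comm]
  · simp only [hn.swap y x]
    module
  · simp only [hn.1.zero_left, hn.1.smul_right, h2, smul_zero, sub_zero]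
  · simp only [hn.1.smul_left, hn.1.smul_right, h2, h2', smul_zero, add_zero]

def heisenbergBracket (u v : Fin 3 → ℂ) : Fin 3 → ℂ :=
  ![0, 0, u 0 * v 1 - v 0 * u 1]

theorem isLieBracket_heisenbergBracket : IsLieBracket heisenbergBracket := by
  refine ⟨⟨fun a x y z => ?_, fun a x y z => ?_⟩, fun x => ?_, fun x y z => ?_⟩ <;>
    ext i <;> fin_cases i <;> simp [heisenbergBracket] <;> ring

theorem heisenbergBracket_heisenbergBracket_right (u v w : Fin 3 → ℂ) :
    heisenbergBracket u (heisenbergBracket v w) = 0 := by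
  ext i
  fin_cases i <;> simp [heisenbergBracket]

def gl2ProdEquiv : (Fin 7 → ℂ) ≃ₗ[ℂ] Matrix (Fin 2) (Fin 2) ℂ × (Fin 3 → ℂ) where
  toFun x := (!![x 3 + x 2, x 0; x 1, x 3 - x 2], ![x 4, x 5, x 6])
  invFun A := ![A.1 0 1, A.1 1 0, (A.1 0 0 - A.1 1 1) / 2, (A.1 0 0 + A.1 1 1) / 2,
    A.2 0, A.2 1, A.2 2]
  map_add' x y := by
    refine Prod.ext ?_ ?_
    · ext i j; fin_cases i <;> fin_cases j <;> simp <;> ring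
    · ext i; fin_cases i <;> simp
  map_smul' a x := by
    refine Prod.ext ?_ ?_
    · ext i j; fin_cases i <;> fin_cases j <;> simp <;> ring
    · ext i; fin_cases i <;> simp
  left_inv x := by
    ext i; fin_cases i <;> simp
  right_inv A := by
    refine Prod.ext ?_ ?_
    · ext i j; fin_cases i <;> fin_cases j <;> simp <;> ring
    · ext i; fin_cases i <;> simp

theorem gl2ProdEquiv_sl2C4Bracket (x y : Fin 7 → ℂ) :
    gl2ProdEquiv (sl2C4Bracket x y) =
      ((gl2ProdEquiv x).1 * (gl2ProdEquiv y).1 - (gl2ProdEquiv y).1 * (gl2ProdEquiv x).1, 0) := by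
  refine Prod.ext ?_ ?_
  · ext i j; fin_cases i <;> fin_cases j <;> simp [gl2ProdEquiv, sl2C4Bracket] <;> ring
  · ext i; fin_cases i <;> simp [gl2ProdEquiv, sl2C4Bracket]

theorem gl2ProdEquiv_c4HeisBracket (x y : Fin 7 → ℂ) :
    gl2ProdEquiv (c4HeisBracket x y) =
      (0, heisenbergBracket (gl2ProdEquiv x).2 (gl2ProdEquiv y).2) := by
  refine Prod.ext ?_ ?_
  · ext i j; fin_cases i <;> fin_cases j <;> simp [gl2ProdEquiv, c4HeisBracket]
  · ext i; fin_cases i <;> simp [gl2ProdEquiv, c4HeisBracket, heisenbergBracket]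

/-- There exists a post-Lie algebra structure on the pair `(g, n)`
with `g = sl₂(ℂ) ⊕ ℂ⁴` and `n = ℂ⁴ ⊕ n₃(ℂ)`, both regarded as Lie brackets on the
same `7`-dimensional complex vector space; in particular `g` is reductive
non-semisimple and `n` is nilpotent non-abelian. -/
theorem postLie_exists_on_sl2c4_c4heis :
    IsLieBracket sl2C4Bracket ∧ IsLieBracket c4HeisBracket ∧
    ∃ p : (Fin 7 → ℂ) → (Fin 7 → ℂ) → (Fin 7 → ℂ),
      IsPostLieStruct sl2C4Bracket c4HeisBracket p := by
  let e := gl2ProdEquiv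
  have hg := (isLieBracket_commutator (A := Matrix (Fin 2) (Fin 2) ℂ)).prod
    (isLieBracket_zero (V := Fin 3 → ℂ))
  have hn := (isLieBracket_zero (V := Matrix (Fin 2) (Fin 2) ℂ)).prod
    isLieBracket_heisenbergBracket
  have hp := (isPostLieStruct_commutator_zero_mul (A := Matrix (Fin 2) (Fin 2) ℂ)).prod
    (isLieBracket_heisenbergBracket.isPostLieStruct_zero_neg_half_smul
      heisenbergBracket_heisenbergBracket_right)
  refine ⟨hg.comap e.toLinearMap e.injective gl2ProdEquiv_sl2C4Bracket,
    hn.comap e.toLinearMap e.injective gl2ProdEquiv_c4HeisBracket,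
    fun x y => e.symm ((e x).1 * (e y).1, (-2⁻¹ : ℂ) • heisenbergBracket (e x).2 (e y).2), ?_⟩
  exact hp.comap e.toLinearMap e.injective gl2ProdEquiv_sl2C4Bracket gl2ProdEquiv_c4HeisBracket
    fun x y => e.apply_symm_apply _
end
end

section
/- Let n ≥ 2. Let V be a complex vector space of dimension n² + 1 with basis (y₁, …, y_{n²}, x). Define two Lie algebra structures on V: g = gl_n(ℂ) ⊕ ℂ, where (y₁, …, y_{n²}) is identified with a basis of gl_n(ℂ) with the commutator bracket and x spans a central line; and n the solvable Lie algebra with brackets {x, y_i} = y_i for 1 ≤ i ≤ n² and {y_i, y_j} = 0. Then there exists a post-Lie algebra structure on the pair (g, n). One such structure is given by y_i · y_j = the matrix product of y_i and y_j in gl_n(ℂ), x·x = 0, y_i·x = 0, and x·y_i = −y_i. -/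
noncomputable section

/-- The underlying vector space of `gl_n(ℂ) ⊕ ℂ`, of dimension `n² + 1`; the basis
vectors `y₁, …, y_{n²}` span the matrix component and `x` spans the `ℂ`-component. -/
abbrev glC (n : ℕ) := Matrix (Fin n) (Fin n) ℂ × ℂ

/-- The bracket of `g = gl_n(ℂ) ⊕ ℂ`: the commutator bracket on `gl_n(ℂ)` and a
central line spanned by `x`. -/
def glCBracket (n : ℕ) (u v : glC n) : glC n :=
  (u.1 * v.1 - v.1 * u.1, 0)

/-- The bracket of the solvable Lie algebra `n` with `{x, yᵢ} = yᵢ` for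
`1 ≤ i ≤ n²` and `{yᵢ, yⱼ} = 0`; in coordinates `{(A, s), (B, t)} = (s B - t A, 0)`. -/
def solvBracket (n : ℕ) (u v : glC n) : glC n :=
  (u.2 • v.1 - v.2 • u.1, 0)

/-- The product given by `yᵢ · yⱼ = yᵢ yⱼ` (matrix product), `x · x = 0`,
`yᵢ · x = 0` and `x · yᵢ = -yᵢ`; in coordinates
`(A, s) · (B, t) = (A B - s B, 0)`. -/
def glCProduct (n : ℕ) (u v : glC n) : glC n :=
  (u.1 * v.1 - u.2 • v.1, 0)

/-! The product is `u · v = (shift u * v.1, 0)` with `shift u = u.1 - u.2 • 1`: left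
multiplication by a shifted element. Since the scalars are central, `shift` turns the bracket
of `g` into the commutator, which gives axiom (2); and any map `w ↦ (T w.1, 0)` with `T`
linear is a derivation of `n`, which gives axiom (3). Only associativity of matrix
multiplication is used, so everything is done for an arbitrary associative `ℂ`-algebra. -/

section AssociativeAlgebra

variable (A : Type*) [Ring A] [Algebra ℂ A]

def commutatorBracket (u v : A × ℂ) : A × ℂ :=
  (u.1 * v.1 - v.1 * u.1, 0)

def scalingBracket (u v : A × ℂ) : A × ℂ :=
  (u.2 • v.1 - v.2 • u.1, 0)

def shiftedMul (u v : A × ℂ) : A × ℂ :=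
  (u.1 * v.1 - u.2 • v.1, 0)

variable {A}

def shift (u : A × ℂ) : A :=
  u.1 - algebraMap ℂ A u.2

theorem isLieBracket_commutatorBracket : IsLieBracket (commutatorBracket A) := by
  refine ⟨⟨fun a x y z => ?_, fun a x y z => ?_⟩, fun x => ?_, fun x y z => ?_⟩ <;>
    ext <;> simp only [commutatorBracket, Prod.fst_add, Prod.smul_fst, Prod.snd_add, Prod.smul_snd,
      add_mul, mul_add, smul_mul_assoc, mul_smul_comm, sub_self, Prod.fst_zero, Prod.snd_zero,
      smul_zero, add_zero]
  · module
  · module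
  · noncomm_ring

theorem isLieBracket_scalingBracket : IsLieBracket (scalingBracket A) := by
  refine ⟨⟨fun a x y z => ?_, fun a x y z => ?_⟩, fun x => ?_, fun x y z => ?_⟩ <;>
    ext <;> simp only [scalingBracket, Prod.fst_add, Prod.smul_fst, Prod.snd_add, Prod.smul_snd,
      Prod.fst_zero, Prod.snd_zero, smul_zero, add_zero, sub_self] <;> module

theorem shiftedMul_eq (u v : A × ℂ) : shiftedMul A u v = (shift u * v.1, 0) := by
  simp only [shiftedMul, shift, sub_mul, Algebra.smul_def]

theorem shift_commutatorBracket (u v : A × ℂ) :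
    shift (commutatorBracket A u v) = shift u * shift v - shift v * shift u := by
  simp only [shift, commutatorBracket, map_zero, sub_zero, Algebra.algebraMap_eq_smul_one, sub_mul,
    mul_sub, smul_mul_assoc, mul_smul_comm, one_mul, mul_one]
  module

theorem scalingBracket_leibniz (T : A →ₗ[ℂ] A) (u v : A × ℂ) :
    (T (scalingBracket A u v).1, (0 : ℂ)) =
      scalingBracket A (T u.1, 0) v + scalingBracket A u (T v.1, 0) := by
  ext <;> simp only [scalingBracket, map_sub, map_smul, Prod.fst_add, Prod.snd_add, zero_smul,
    zero_sub, sub_zero, add_zero]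
  abel

theorem isPostLieStruct_shiftedMul :
    IsPostLieStruct (commutatorBracket A) (scalingBracket A) (shiftedMul A) := by
  refine ⟨⟨fun a x y z => ?_, fun a x y z => ?_⟩, fun x y => ?_, fun x y z => ?_, fun x y z => ?_⟩
  · ext <;> simp only [shiftedMul, Prod.fst_add, Prod.smul_fst, Prod.snd_add, Prod.smul_snd,
      add_mul, add_smul, smul_mul_assoc, smul_zero, add_zero]
    module
  · ext <;> simp only [shiftedMul, Prod.fst_add, Prod.smul_fst, Prod.snd_add, Prod.smul_snd,
      mul_add, smul_add, mul_smul_comm, smul_smul, smul_zero, add_zero]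
    module
  · ext <;> simp only [shiftedMul, commutatorBracket, scalingBracket, Prod.fst_sub, Prod.snd_sub,
      sub_self]
    abel
  · simp only [shiftedMul_eq, shift_commutatorBracket, Prod.mk_sub_mk, sub_zero, sub_mul, mul_assoc]
  · simpa only [shiftedMul_eq, LinearMap.mulLeft_apply] using
      scalingBracket_leibniz (LinearMap.mulLeft ℂ (shift x)) y z

end AssociativeAlgebra

theorem postLie_on_glnC_solvable_general (n : ℕ) :
    IsLieBracket (glCBracket n) ∧ IsLieBracket (solvBracket n) ∧
    IsPostLieStruct (glCBracket n) (solvBracket n) (glCProduct n) :=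
  ⟨isLieBracket_commutatorBracket, isLieBracket_scalingBracket, isPostLieStruct_shiftedMul⟩

/-- For `n ≥ 2`, consider on the `(n² + 1)`-dimensional space
`gl_n(ℂ) × ℂ` the Lie brackets of `g = gl_n(ℂ) ⊕ ℂ` and of the solvable Lie algebra
`n` with `{x, yᵢ} = yᵢ`, `{yᵢ, yⱼ} = 0`. Then there exists a post-Lie algebra
structure on the pair `(g, n)`; one such structure is
`yᵢ · yⱼ = yᵢ yⱼ` (matrix product), `x · x = 0`, `yᵢ · x = 0`, `x · yᵢ = -yᵢ`. -/
theorem postLie_on_glnC_solvable (n : ℕ) (hn : 2 ≤ n) :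
    IsLieBracket (glCBracket n) ∧ IsLieBracket (solvBracket n) ∧
    IsPostLieStruct (glCBracket n) (solvBracket n) (glCProduct n) :=
  postLie_on_glnC_solvable_general n
end
end

section
/- Let V be a finite-dimensional complex vector space carrying two Lie algebra structures g = (V, [·,·]) and n = (V, {·,·}), where n is 2-step nilpotent, i.e., {x, {y, z}} = 0 for all x, y, z ∈ V. If x·y is a post-Lie algebra structure on the pair (g, n), then the bilinear product x∘y := (1/2){x, y} + x·y is a pre-Lie algebra structure on g; that is, for all x, y, z ∈ V: x∘y − y∘x = [x, y] and [x, y]∘z = x∘(y∘z) − y∘(x∘z). -/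
/-!
Write `{x, y}` for the bracket of `n` pulled back to `G` (`pullbackBracket e`), `x · y` for `p x y`
and `x ∘ y = c {x, y} + x · y` (`postLieShift e p c`). Because `n` is 2-step nilpotent, every
double bracket vanishes, so expanding `x ∘ (y ∘ z) - y ∘ (x ∘ z)` with the derivation axiom leaves
only `c {x · y - y · x, z} + [x, y] · z`. By the first post-Lie axiom
`x · y - y · x = [x, y] - {x, y}`, and `{{x, y}, z} = 0` again, this is `[x, y] ∘ z`, for every `c`.
The commutator identity `x ∘ y - y ∘ x = [x, y]` is where `c = 1/2` is needed.
-/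

section PostLie

variable {R G N : Type*} [CommRing R] [LieRing G] [LieAlgebra R G] [LieRing N] [LieAlgebra R N]

def pullbackBracket (e : G ≃ₗ[R] N) : G →ₗ[R] G →ₗ[R] G :=
  LinearMap.mk₂ R (fun x y => e.symm ⁅e x, e y⁆)
    (by simp [add_lie]) (by simp [smul_lie]) (by simp [lie_add]) (by simp [lie_smul])

lemma pullbackBracket_apply (e : G ≃ₗ[R] N) (x y : G) :
    pullbackBracket e x y = e.symm ⁅e x, e y⁆ := rfl

lemma pullbackBracket_swap (e : G ≃ₗ[R] N) (x y : G) :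
    pullbackBracket e y x = -pullbackBracket e x y := by
  simp only [pullbackBracket_apply, ← map_neg, lie_skew]

section TwoStep

variable {e : G ≃ₗ[R] N} (h2step : ∀ x y z : N, ⁅x, ⁅y, z⁆⁆ = 0)
include h2step

lemma pullbackBracket_pullbackBracket_right (x y z : G) :
    pullbackBracket e x (pullbackBracket e y z) = 0 := by
  simp [pullbackBracket_apply, h2step]

lemma pullbackBracket_pullbackBracket_left (x y z : G) :
    pullbackBracket e (pullbackBracket e x y) z = 0 := by
  rw [pullbackBracket_swap, pullbackBracket_pullbackBracket_right h2step, neg_zero]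

end TwoStep

structure IsPostLie (e : G ≃ₗ[R] N) (p : G →ₗ[R] G →ₗ[R] G) : Prop where
  sub_swap : ∀ x y, p x y - p y x = ⁅x, y⁆ - pullbackBracket e x y
  lie_apply : ∀ x y z, p ⁅x, y⁆ z = p x (p y z) - p y (p x z)
  apply_pullbackBracket : ∀ x y z,
    p x (pullbackBracket e y z) = pullbackBracket e (p x y) z + pullbackBracket e y (p x z)

def postLieShift (e : G ≃ₗ[R] N) (p : G →ₗ[R] G →ₗ[R] G) (c : R) (x y : G) : G :=
  c • pullbackBracket e x y + p x y

namespace IsPostLie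

variable {e : G ≃ₗ[R] N} {p : G →ₗ[R] G →ₗ[R] G}

lemma postLieShift_sub_swap (hp : IsPostLie e p) {c : R} (hc : c + c = 1) (x y : G) :
    postLieShift e p c x y - postLieShift e p c y x = ⁅x, y⁆ := by
  simp only [postLieShift, pullbackBracket_swap e x y]
  linear_combination (norm := module) hp.sub_swap x y + hc • pullbackBracket e x y

lemma postLieShift_postLieShift (hp : IsPostLie e p) (h2step : ∀ x y z : N, ⁅x, ⁅y, z⁆⁆ = 0)
    (c : R) (x y z : G) :
    postLieShift e p c x (postLieShift e p c y z) =
      c • pullbackBracket e x (p y z) + c • pullbackBracket e (p x y) z +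
        c • pullbackBracket e y (p x z) + p x (p y z) := by
  simp only [postLieShift, map_add, map_smul, hp.apply_pullbackBracket,
    pullbackBracket_pullbackBracket_right h2step, smul_zero, zero_add, smul_add]
  abel

lemma postLieShift_lie (hp : IsPostLie e p) (h2step : ∀ x y z : N, ⁅x, ⁅y, z⁆⁆ = 0)
    (c : R) (x y z : G) :
    postLieShift e p c ⁅x, y⁆ z =
      postLieShift e p c x (postLieShift e p c y z) -
        postLieShift e p c y (postLieShift e p c x z) := by
  have hcomm : pullbackBracket e (p x y) z - pullbackBracket e (p y x) z =
      pullbackBracket e ⁅x, y⁆ z := by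
    rw [← LinearMap.sub_apply, ← map_sub, hp.sub_swap, map_sub, LinearMap.sub_apply,
      pullbackBracket_pullbackBracket_left h2step, sub_zero]
  rw [hp.postLieShift_postLieShift h2step, hp.postLieShift_postLieShift h2step, postLieShift]
  linear_combination (norm := module) hp.lie_apply x y z - c • hcomm

end IsPostLie

end PostLie

theorem postLie_two_step_nilpotent_gives_preLie_general
    {G N : Type*} [LieRing G] [LieAlgebra ℂ G]
    [LieRing N] [LieAlgebra ℂ N]
    (e : G ≃ₗ[ℂ] N)
    (h2step : ∀ x y z : N, ⁅x, ⁅y, z⁆⁆ = 0)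
    (p : G →ₗ[ℂ] G →ₗ[ℂ] G)
    (hax1 : ∀ x y : G, p x y - p y x = ⁅x, y⁆ - e.symm ⁅e x, e y⁆)
    (hax2 : ∀ x y z : G, p ⁅x, y⁆ z = p x (p y z) - p y (p x z))
    (hax3 : ∀ x y z : G,
      p x (e.symm ⁅e y, e z⁆) = e.symm ⁅e (p x y), e z⁆ + e.symm ⁅e y, e (p x z)⁆) :
    letI q : G → G → G := fun x y => (1 / 2 : ℂ) • e.symm ⁅e x, e y⁆ + p x y
    (∀ x y : G, q x y - q y x = ⁅x, y⁆) ∧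
    (∀ x y z : G, q ⁅x, y⁆ z = q x (q y z) - q y (q x z)) := by
  have hp : IsPostLie e p := ⟨hax1, hax2, hax3⟩
  exact ⟨hp.postLieShift_sub_swap (by norm_num), hp.postLieShift_lie h2step _⟩

/-- Let `g` and `n` be two Lie algebra structures on the same
finite-dimensional complex vector space (formalized as Lie algebras `G`, `N` with a
linear equivalence `e : G ≃ₗ[ℂ] N` identifying the underlying vector spaces), where
`n` is `2`-step nilpotent, i.e. `{x, {y, z}} = 0` for all `x, y, z`. If `p` is a
post-Lie algebra structure on the pair `(g, n)`, then
`x ∘ y := (1/2) {x, y} + x · y` is a pre-Lie algebra structure on `g`: for all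
`x, y, z` we have `x ∘ y - y ∘ x = [x, y]` and
`[x, y] ∘ z = x ∘ (y ∘ z) - y ∘ (x ∘ z)`. -/
theorem postLie_two_step_nilpotent_gives_preLie
    {G N : Type*} [LieRing G] [LieAlgebra ℂ G] [Module.Finite ℂ G]
    [LieRing N] [LieAlgebra ℂ N]
    (e : G ≃ₗ[ℂ] N)
    (h2step : ∀ x y z : N, ⁅x, ⁅y, z⁆⁆ = 0)
    (p : G →ₗ[ℂ] G →ₗ[ℂ] G)
    (hax1 : ∀ x y : G, p x y - p y x = ⁅x, y⁆ - e.symm ⁅e x, e y⁆)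
    (hax2 : ∀ x y z : G, p ⁅x, y⁆ z = p x (p y z) - p y (p x z))
    (hax3 : ∀ x y z : G,
      p x (e.symm ⁅e y, e z⁆) = e.symm ⁅e (p x y), e z⁆ + e.symm ⁅e y, e (p x z)⁆) :
    letI q : G → G → G := fun x y => (1 / 2 : ℂ) • e.symm ⁅e x, e y⁆ + p x y
    (∀ x y : G, q x y - q y x = ⁅x, y⁆) ∧
    (∀ x y z : G, q ⁅x, y⁆ z = q x (q y z) - q y (q x z)) :=
  postLie_two_step_nilpotent_gives_preLie_general e h2step p hax1 hax2 hax3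
end
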